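/- Transition probability after a change at odd gap: for the stationary simple random walk on G_K started at a with N blocks of lengths M_1,...,M_N, and for 2 ≤ n ≤ N, P(ε_n = 1 | ε_{n-1} = 0, ..., ε_{n-(2k-2)} = 0, ε_{n-(2k-1)} = 1, Y(0) = a) = M_n · x_n^N, where x_n^N = [M_n; M_{n+1},...,M_N,1] (with the convention x_{N+1}^N = 1, and in particular when n = N this equals M_N/(M_N+1)). -/

import Mathlib

open MeasureTheory ProbabilityTheory Finset

noncomputable section

/-- The sample space of the coupled construction: `ε`, `(α_k)`, `(β_k)`. -/
abbrev Omega (K : ℕ) := Bool × (Fin K → Fin 3) × (Fin K → Bool)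

/-- The uniform probability measure on `Omega K`; its coordinates are independent,
`ε` is uniform on `{-1,1}` (via `Bool`), each `α_k` is Bernoulli(1/3)
(`α_k = 1` iff the `Fin 3` coordinate equals `0`), each `β_k` uniform on `{-1,1}`. -/
def unif (K : ℕ) : Measure (Omega K) := (PMF.uniformOfFintype (Omega K)).toMeasure

def sgn (b : Bool) : ℤ := if b then 1 else -1

def epsRV {K : ℕ} (ω : Omega K) : ℤ := sgn ω.1

def alphaRV {K : ℕ} (k : Fin K) (ω : Omega K) : ℤ := if ω.2.1 k = 0 then 1 else 0

def alphaN {K : ℕ} (k : Fin K) (ω : Omega K) : ℕ := if ω.2.1 k = 0 then 1 else 0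

def betaRV {K : ℕ} (k : Fin K) (ω : Omega K) : ℤ := sgn (ω.2.2 k)

/-- `γ_{j+1} = ε · (-1)^{α_1 + ⋯ + α_j}` (0-indexed: `gammaRV j` is the paper's `γ_{j+1}`). -/
def gammaRV {K : ℕ} (j : ℕ) (ω : Omega K) : ℤ :=
  epsRV ω * (-1) ^ (∑ k ∈ Finset.univ.filter (fun k : Fin K => (k : ℕ) < j), alphaN k ω)

/-- `A_k = (1-α_k)β_k + α_k γ_k`. -/
def ARV {K : ℕ} (k : Fin K) (ω : Omega K) : ℤ :=
  (1 - alphaRV k ω) * betaRV k ω + alphaRV k ω * gammaRV (k : ℕ) ω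

/-- `B_k = (1-α_k)β_k - α_k γ_k`. -/
def BRV {K : ℕ} (k : Fin K) (ω : Omega K) : ℤ :=
  (1 - alphaRV k ω) * betaRV k ω - alphaRV k ω * gammaRV (k : ℕ) ω

/-- The nonzero coordinates of `v - u` have alternating signs: whenever `i < j` are
two "changed" coordinates with no changed coordinate strictly between them,
the changes have opposite signs. -/
def AltSigns {K : ℕ} (u v : Fin K → ℤ) : Prop :=
  ∀ i j : Fin K, i < j → u i ≠ v i → u j ≠ v j →
    (∀ l : Fin K, i < l → l < j → u l = v l) → v i - u i = -(v j - u j)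

/-- The first nonzero coordinate of `v - u` is negative if `s = true` (positive edges `E⁺`),
positive if `s = false` (negative edges `E⁻`). -/
def FirstSign {K : ℕ} (s : Bool) (u v : Fin K → ℤ) : Prop :=
  ∀ i : Fin K, u i ≠ v i → (∀ l : Fin K, l < i → u l = v l) →
    (if s then v i - u i < 0 else 0 < v i - u i)

/-- `(u,v)` is an edge of sign `s` of the multigraph `G_K`: either a loop (each vertex
carries one loop of each sign), or `u ≠ v` with alternating signs starting as dictated by `s`. -/
def IsEdge {K : ℕ} (s : Bool) (u v : Fin K → ℤ) : Prop :=
  u = v ∨ (u ≠ v ∧ AltSigns u v ∧ FirstSign s u v)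

/-- Interpret a Boolean vector as a vertex of `V_K = {-1,1}^K`. -/
def toPM {K : ℕ} (b : Fin K → Bool) : Fin K → ℤ := fun k => if b k then 1 else -1

/-- Partial sums `S_m = M_1 + ⋯ + M_m` of the block lengths. -/
def Ssum (M : ℕ → ℕ) (m : ℕ) : ℕ := ∑ k ∈ Finset.range m, M k

/-- 0-indexed block index of position `k` (positions `Ssum M j ≤ k < Ssum M (j+1)`
belong to block `j`). -/
def blk (M : ℕ → ℕ) (N : ℕ) (k : ℕ) : ℕ :=
  ((Finset.range N).filter (fun m => Ssum M (m + 1) ≤ k)).card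

/-- The vertex `a ∈ {-1,1}^K` whose maximal constancy blocks have lengths
`M_1, …, M_N` and whose first digit is `1` (so block `j` carries the value `(-1)^j`,
0-indexed). -/
def avert (M : ℕ → ℕ) (N : ℕ) {K : ℕ} : Fin K → ℤ :=
  fun k => if blk M N (k : ℕ) % 2 = 0 then 1 else -1

/-- Finite continued fraction: `cf [a₁, …, aₙ] = 1/(a₁ + 1/(a₂ + ⋯ + 1/(aₙ + 1)))`,
with `cf [] = 1`. -/
noncomputable def cf : List ℝ → ℝ
  | [] => 1
  | a :: l => 1 / (a + cf l)

/-- `x_j^N = [M_j; M_{j+1}, …, M_{N-1}, 1]` (0-indexed blocks `j, …, N-1`);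
for `j = N` this is the convention `x_{N+1}^N = 1`. -/
noncomputable def xcf (M : ℕ → ℕ) (N j : ℕ) : ℝ :=
  cf ((List.range (N - j)).map fun i => (M (j + i) : ℝ))

/-- `ε_j = 1`: the step of the walk changes a digit in the `j`-th (0-indexed)
constancy block, i.e. `B` differs from `A` at some position of block `j`. -/
def epsChange {K : ℕ} (M : ℕ → ℕ) (N : ℕ) (j : ℕ) (ω : Omega K) : Prop :=
  ∃ k : Fin K, blk M N (k : ℕ) = j ∧ BRV k ω ≠ ARV k ω


/-!
Given `A = a`, a sample point is determined by the sign `ε`, the set `S` of changed digits and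
`2 ^ K` equally likely free bits (`β_k` on `S`, the choice `α_k ∈ {1, 2}` off `S`), and `A = a`
says exactly that the digits of `a` along `S` alternate in sign starting with `ε`. So conditional
probabilities of events read off `(ε, S)` are ratios of numbers of such alternating patterns.

Since `a` is constant on blocks with alternating signs, consecutive changes of an alternating
pattern lie in blocks at odd distance. A pattern changing block `j'` and none of the blocks
strictly between `j'` and `j` therefore splits into a head ending in block `j'` and a tail in
blocks `≥ j` starting with the sign of block `j`, and the number of heads cancels. Let `c_t` be the
number of alternating tails in blocks `≥ t` starting with the sign of block `t`. The tails changing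
block `t` are a position of block `t` followed by a tail counted by `c_{t+1}`, the others are the
tails counted by `c_{t+2}`; so `c_t = M_t c_{t+1} + c_{t+2}` with `c_N = c_{N+1} = 1`, which is the
recursion of the continued fractions: `x_t = c_{t+1} / c_t`. The probability is
`M_j c_{j+1} / c_j = M_j x_j`.
-/

open scoped Classical

section Alternates

variable {α : Type*} [LinearOrder α] {f : α → ℤ} {A B T : Finset α} {e : ℤ}

def Alternates (f : α → ℤ) (T : Finset α) (e : ℤ) : Prop :=
  ∀ k ∈ T, f k = e * (-1) ^ #{l ∈ T | l < k}

theorem alternates_union (hAB : ∀ a ∈ A, ∀ b ∈ B, a < b) :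
    Alternates f (A ∪ B) e ↔ Alternates f A e ∧ Alternates f B (e * (-1) ^ #A) := by
  have below_A : ∀ k ∈ A, {l ∈ A ∪ B | l < k} = {l ∈ A | l < k} := fun k hk => by
    ext l
    simp only [mem_filter, mem_union]
    exact ⟨fun ⟨hl, hlk⟩ => ⟨hl.resolve_right fun hB => (hAB k hk l hB).not_gt hlk, hlk⟩,
      fun ⟨hl, hlk⟩ => ⟨Or.inl hl, hlk⟩⟩
  have below_B : ∀ k ∈ B, {l ∈ A ∪ B | l < k} = A ∪ {l ∈ B | l < k} := fun k hk => by
    ext l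
    simp only [mem_filter, mem_union]
    exact ⟨fun ⟨hl, hlk⟩ => hl.imp_right (⟨·, hlk⟩),
      fun hl => hl.elim (fun hA => ⟨Or.inl hA, hAB l hA k hk⟩)
        fun ⟨hB, hlk⟩ => ⟨Or.inr hB, hlk⟩⟩
  have hdisj : ∀ k, Disjoint A {l ∈ B | l < k} := fun k =>
    disjoint_left.2 fun a ha hb => (hAB a ha a (mem_filter.1 hb).1).false
  unfold Alternates
  rw [forall_mem_union]
  refine and_congr (forall₂_congr fun k hk => by rw [below_A k hk])
    (forall₂_congr fun k hk => ?_)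
  rw [below_B k hk, card_union_of_disjoint (hdisj k), pow_add, mul_assoc]

theorem alternates_singleton {a : α} : Alternates f {a} e ↔ f a = e := by
  simp [Alternates, filter_singleton]

theorem Alternates.apply_of_forall_le (h : Alternates f T e) {k : α} (hk : k ∈ T)
    (hmin : ∀ l ∈ T, k ≤ l) : f k = e := by
  have : {l ∈ T | l < k} = ∅ := filter_eq_empty_iff.2 fun l hl => (hmin l hl).not_gt
  simpa [this] using h k hk

theorem Alternates.apply_max' (h : Alternates f T e) (hT : T.Nonempty) :
    f (T.max' hT) = e * (-1) ^ (#T - 1) := by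
  have : {l ∈ T | l < T.max' hT} = T.erase (T.max' hT) := by
    ext l
    simp only [mem_filter, mem_erase]
    exact ⟨fun ⟨hl, hlt⟩ => ⟨hlt.ne, hl⟩,
      fun ⟨hne, hl⟩ => ⟨hl, lt_of_le_of_ne (le_max' T l hl) hne⟩⟩
  rw [h _ (max'_mem T hT), this, card_erase_of_mem (max'_mem T hT)]

end Alternates

theorem lt_card_filter_range_iff {p : ℕ → Prop} [DecidablePred p]
    (hp : ∀ ⦃m n⦄, m ≤ n → p n → p m) {N m : ℕ} :
    m < #{n ∈ range N | p n} ↔ m < N ∧ p m := by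
  constructor
  · intro hm
    by_contra hfalse
    have : {n ∈ range N | p n} ⊆ range m := fun n hn => by
      rw [mem_filter, mem_range] at hn
      by_contra hnm
      rw [mem_range, not_lt] at hnm
      exact hfalse ⟨by omega, hp hnm hn.2⟩
    simpa using (card_le_card this).trans_lt' hm
  · rintro ⟨hmN, hpm⟩
    have : range (m + 1) ⊆ {n ∈ range N | p n} := fun n hn => by
      rw [mem_range] at hn
      exact mem_filter.2 ⟨mem_range.2 (by omega), hp (by omega) hpm⟩
    simpa using card_le_card this

section Blocks

variable (M : ℕ → ℕ) (N : ℕ)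

theorem Ssum_mono : Monotone (Ssum M) := fun _ _ h =>
  sum_le_sum_of_subset (range_subset_range.2 h)

theorem Ssum_succ (m : ℕ) : Ssum M (m + 1) = Ssum M m + M m :=
  sum_range_succ _ _

theorem blk_mono : Monotone (blk M N) := fun _ _ h =>
  card_le_card fun _ hm => by
    rw [mem_filter] at hm ⊢
    exact ⟨hm.1, hm.2.trans h⟩

variable {M N}

theorem lt_blk_iff {k m : ℕ} : m < blk M N k ↔ m < N ∧ Ssum M (m + 1) ≤ k :=
  lt_card_filter_range_iff fun _ _ h hn => (Ssum_mono M (by omega)).trans hn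

theorem blk_eq_iff {k t : ℕ} (ht : t < N) :
    blk M N k = t ↔ Ssum M t ≤ k ∧ k < Ssum M (t + 1) := by
  have h_lt := (lt_blk_iff (M := M) (N := N) (k := k) (m := t)).not
  have h_pred : t ≤ blk M N k ↔ Ssum M t ≤ k := by
    cases t with
    | zero => simp [Ssum]
    | succ s => rw [Nat.succ_le_iff, lt_blk_iff]; exact and_iff_right (by omega)
  rw [le_antisymm_iff, ← not_lt, h_lt, h_pred]
  simp only [ht, true_and, not_le]
  exact and_comm

theorem blk_lt {k : ℕ} (hk : k < Ssum M N) : blk M N k < N := by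
  have hle : blk M N k ≤ N := (card_filter_le _ _).trans_eq (card_range N)
  have hN : N ≠ 0 := by rintro rfl; simp [Ssum] at hk
  refine lt_of_le_of_ne hle fun h => ?_
  have := (lt_blk_iff (M := M) (N := N) (k := k) (m := N - 1)).1 (by omega)
  rw [Nat.sub_add_cancel (by omega)] at this
  omega

theorem blk_val_lt {K : ℕ} (hK : Ssum M N = K) (k : Fin K) : blk M N k < N :=
  blk_lt (hK ▸ k.isLt)

theorem lt_of_blk_lt {K : ℕ} {k l : Fin K} (h : blk M N k < blk M N l) : k < l :=
  Fin.lt_def.2 ((blk_mono M N).reflect_lt h)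

theorem lt_of_blk_lt_of_le_blk {K i : ℕ} {S T : Finset (Fin K)} (hS : ∀ k ∈ S, blk M N k < i)
    (hT : ∀ k ∈ T, i ≤ blk M N k) : ∀ a ∈ S, ∀ b ∈ T, a < b := fun a ha b hb =>
  lt_of_blk_lt ((hS a ha).trans_le (hT b hb))

theorem avert_eq_neg_one_pow {K : ℕ} (k : Fin K) : avert M N k = (-1) ^ blk M N k := by
  rw [avert, neg_one_pow_eq_pow_mod_two]
  split_ifs with h <;> simp [h, Nat.mod_two_ne_zero.1]

theorem card_filter_blk_eq {K t : ℕ} (hK : Ssum M N = K) (ht : t < N) :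
    #{k : Fin K | blk M N k = t} = M t := by
  have hle : Ssum M (t + 1) ≤ K := hK ▸ Ssum_mono M ht
  have h_range : #{k : Fin K | blk M N k = t} = #{n ∈ range K | blk M N n = t} := by
    refine card_bij (fun k _ => (k : ℕ)) (by simp) (fun _ _ _ _ => Fin.ext) ?_
    simp only [mem_filter, mem_univ, true_and, mem_range]
    exact fun n hn => ⟨⟨n, hn.1⟩, hn.2, rfl⟩
  have h_Ico : {n ∈ range K | blk M N n = t} = Ico (Ssum M t) (Ssum M (t + 1)) := by
    ext n
    simp only [mem_filter, mem_range, mem_Ico, blk_eq_iff ht]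
    omega
  rw [h_range, h_Ico, Nat.card_Ico, Ssum_succ, Nat.add_sub_cancel_left]

theorem exists_sgn_eq_avert {K : ℕ} (k : Fin K) : ∃ b, sgn b = avert M N k :=
  ⟨decide (blk M N k % 2 = 0), by rw [avert]; split_ifs <;> simp [sgn, *]⟩

end Blocks

theorem mod_two_eq_of_neg_one_pow_eq {a b : ℕ} (h : (-1 : ℤ) ^ a = (-1) ^ b) :
    a % 2 = b % 2 := by
  rw [neg_one_pow_eq_pow_mod_two, neg_one_pow_eq_pow_mod_two (n := b)] at h
  rcases Nat.mod_two_eq_zero_or_one a with ha | ha <;>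
    rcases Nat.mod_two_eq_zero_or_one b with hb | hb <;> simp_all

def HitsBlock (M : ℕ → ℕ) (N : ℕ) {K : ℕ} (T : Finset (Fin K)) (i : ℕ) : Prop :=
  ∃ k ∈ T, blk M N k = i

theorem hitsBlock_union_iff_of_lt {M : ℕ → ℕ} {N K i : ℕ} {S T : Finset (Fin K)}
    (hS : ∀ k ∈ S, blk M N k < i) : HitsBlock M N (S ∪ T) i ↔ HitsBlock M N T i :=
  ⟨fun ⟨k, hk, hki⟩ => (mem_union.1 hk).elim (fun h => absurd hki (hS k h).ne) (⟨k, ·, hki⟩),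
    fun ⟨k, hk, hki⟩ => ⟨k, mem_union_right S hk, hki⟩⟩

def HitsAfterGap (M : ℕ → ℕ) (N : ℕ) {K : ℕ} (j' j : ℕ) (T : Finset (Fin K)) : Prop :=
  HitsBlock M N T j' ∧ ∀ i, j' < i → i < j → ¬ HitsBlock M N T i

section TailPatterns

variable {M : ℕ → ℕ} {N K t : ℕ}

variable (M N K) in
def tailPatterns (t : ℕ) : Finset (Finset (Fin K)) :=
  {T | Alternates (avert M N) T ((-1) ^ t) ∧ ∀ k ∈ T, t ≤ blk M N k}

theorem mem_tailPatterns {T : Finset (Fin K)} :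
    T ∈ tailPatterns M N K t ↔ Alternates (avert M N) T ((-1) ^ t) ∧ ∀ k ∈ T, t ≤ blk M N k := by
  simp [tailPatterns]

theorem card_tailPatterns_pos : 0 < #(tailPatterns M N K t) :=
  card_pos.2 ⟨∅, mem_tailPatterns.2
    ⟨fun _ h => absurd h (notMem_empty _), fun _ h => absurd h (notMem_empty _)⟩⟩

/-- The first element of `T` lies in a block of the parity of `s`, hence not in block `s - 1`. -/
theorem le_blk_of_alternates {T : Finset (Fin K)} {s : ℕ}
    (h : Alternates (avert M N) T ((-1) ^ s)) (hge : ∀ k ∈ T, s ≤ blk M N k + 1) :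
    ∀ k ∈ T, s ≤ blk M N k := by
  intro k hk
  have hT : T.Nonempty := ⟨k, hk⟩
  have hmin := h.apply_of_forall_le (min'_mem T hT) fun l hl => min'_le T l hl
  rw [avert_eq_neg_one_pow] at hmin
  have := mod_two_eq_of_neg_one_pow_eq hmin
  have := hge _ (min'_mem T hT)
  have := blk_mono M N (Fin.le_def.1 (min'_le T k hk))
  omega

theorem tailPatterns_of_le (hK : Ssum M N = K) (ht : N ≤ t) : tailPatterns M N K t = {∅} := by
  ext T
  rw [mem_singleton, mem_tailPatterns, eq_empty_iff_forall_notMem]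
  constructor
  · rintro ⟨-, hge⟩ k hk
    have := hge k hk
    have := blk_val_lt hK k
    omega
  · rintro h
    exact ⟨fun k hk => absurd hk (h k), fun k hk => absurd hk (h k)⟩

theorem insert_mem_tailPatterns_iff {k : Fin K} {T : Finset (Fin K)} (hk : blk M N k = t)
    (hT : ∀ l ∈ T, k < l) :
    insert k T ∈ tailPatterns M N K t ↔ T ∈ tailPatterns M N K (t + 1) := by
  rw [mem_tailPatterns, mem_tailPatterns, insert_eq,
    alternates_union (by simpa using hT), alternates_singleton, forall_mem_union]
  simp only [avert_eq_neg_one_pow, hk, card_singleton, pow_one, ← pow_succ, mem_singleton,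
    forall_eq, le_refl, true_and]
  constructor
  · rintro ⟨halt, hge⟩
    exact ⟨halt, le_blk_of_alternates halt fun l hl => by have := hge l hl; omega⟩
  · rintro ⟨halt, hge⟩
    exact ⟨halt, fun l hl => by have := hge l hl; omega⟩

theorem card_filter_hitsBlock_tailPatterns (hK : Ssum M N = K) (ht : t < N) :
    #{T ∈ tailPatterns M N K t | HitsBlock M N T t} = M t * #(tailPatterns M N K (t + 1)) := by
  have below_of_mem : ∀ {k : Fin K} {T : Finset (Fin K)}, blk M N k = t →
      T ∈ tailPatterns M N K (t + 1) → ∀ l ∈ T, k < l := fun hk hT l hl =>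
    lt_of_blk_lt (M := M) (N := N) (by have := (mem_tailPatterns.1 hT).2 l hl; omega)
  have hne : ∀ T ∈ {T ∈ tailPatterns M N K t | HitsBlock M N T t}, T.Nonempty :=
    fun T hT => let ⟨k, hk, _⟩ := (mem_filter.1 hT).2; ⟨k, hk⟩
  rw [← card_filter_blk_eq hK ht, ← card_product]
  symm
  refine card_bij' (fun p _ => insert p.1 p.2)
    (fun T hT => ((T.min' (hne T hT)), T.erase (T.min' (hne T hT)))) ?_ ?_ ?_ ?_
  · rintro ⟨k, T⟩ hkT
    obtain ⟨hk, hT⟩ := mem_product.1 hkT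
    simp only [mem_filter, mem_univ, true_and] at hk
    exact mem_filter.2 ⟨(insert_mem_tailPatterns_iff hk (below_of_mem hk hT)).2 hT,
      k, mem_insert_self k T, hk⟩
  · intro T hT
    obtain ⟨hT, k, hk, hkt⟩ := mem_filter.1 hT
    set m := T.min' (hne T (mem_filter.2 ⟨hT, k, hk, hkt⟩))
    have hm : blk M N m = t := le_antisymm
      (hkt ▸ blk_mono M N (Fin.le_def.1 (min'_le T k hk)))
      ((mem_tailPatterns.1 hT).2 m (min'_mem _ _))
    refine mem_product.2 ⟨by simpa using hm, (insert_mem_tailPatterns_iff hm ?_).1 ?_⟩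
    · exact fun l hl => min'_lt_of_mem_erase_min' _ _ hl
    · rwa [insert_erase (min'_mem _ _)]
  · rintro ⟨k, T⟩ hkT
    obtain ⟨hk, hT⟩ := mem_product.1 hkT
    simp only [mem_filter, mem_univ, true_and] at hk
    have hbelow := below_of_mem hk hT
    have hmin : (insert k T).min' (insert_nonempty k T) = k :=
      le_antisymm (min'_le _ k (mem_insert_self k T))
        (le_min' _ _ _ fun l hl => (mem_insert.1 hl).elim ge_of_eq fun h => (hbelow l h).le)
    simp only [hmin, erase_insert fun h => (hbelow k h).false]
  · intro T hT
    exact insert_erase (min'_mem _ (hne T hT))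

theorem filter_not_hitsBlock_tailPatterns :
    {T ∈ tailPatterns M N K t | ¬ HitsBlock M N T t} = tailPatterns M N K (t + 2) := by
  ext T
  rw [mem_filter, mem_tailPatterns, mem_tailPatterns]
  simp only [HitsBlock, not_exists, not_and, pow_add (-1 : ℤ) t 2, neg_one_sq, mul_one]
  constructor
  · rintro ⟨⟨halt, hge⟩, hnot⟩
    refine ⟨halt, le_blk_of_alternates (by rwa [pow_add, neg_one_sq, mul_one]) fun k hk => ?_⟩
    have := hge k hk
    have := hnot k hk
    omega
  · rintro ⟨halt, hge⟩
    exact ⟨⟨halt, fun k hk => by have := hge k hk; omega⟩,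
      fun k hk => by have := hge k hk; omega⟩

theorem card_tailPatterns_eq (hK : Ssum M N = K) (ht : t < N) :
    #(tailPatterns M N K t) =
      M t * #(tailPatterns M N K (t + 1)) + #(tailPatterns M N K (t + 2)) := by
  rw [← card_filter_hitsBlock_tailPatterns hK ht, ← filter_not_hitsBlock_tailPatterns,
    card_filter_add_card_filter_not]

theorem xcf_self : xcf M N N = 1 := by
  simp [xcf, cf]

theorem xcf_of_lt (ht : t < N) : xcf M N t = 1 / (M t + xcf M N (t + 1)) := by
  rw [xcf, xcf, show N - t = N - (t + 1) + 1 by omega, List.range_succ_eq_map, List.map_cons,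
    List.map_map]
  simp [cf, Function.comp_def, add_assoc, add_comm 1]

theorem xcf_eq_div (hK : Ssum M N = K) (ht : t ≤ N) :
    xcf M N t = #(tailPatterns M N K (t + 1)) / #(tailPatterns M N K t) := by
  induction ht using Nat.decreasingInduction with
  | self => simp [xcf_self, tailPatterns_of_le hK]
  | of_succ t ht ih =>
    have := card_tailPatterns_pos (M := M) (N := N) (K := K) (t := t + 1)
    have := card_tailPatterns_pos (M := M) (N := N) (K := K) (t := t + 2)
    rw [xcf_of_lt ht, ih, card_tailPatterns_eq hK ht]
    push_cast
    field_simp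

end TailPatterns

section SampleSpace

variable {K : ℕ} {M : ℕ → ℕ} {N : ℕ}

def changedDigits (ω : Omega K) : Finset (Fin K) := {k | ω.2.1 k = 0}

theorem mem_changedDigits {ω : Omega K} {k : Fin K} : k ∈ changedDigits ω ↔ ω.2.1 k = 0 := by
  simp [changedDigits]

theorem gammaRV_eq (ω : Omega K) (k : Fin K) :
    gammaRV k ω = epsRV ω * (-1) ^ #{l ∈ changedDigits ω | l < k} := by
  rw [gammaRV, changedDigits, filter_filter]
  simp only [alphaN, sum_boole, filter_filter, Nat.cast_id, Fin.lt_def, and_comm]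

theorem gammaRV_ne_zero (ω : Omega K) (k : Fin K) : gammaRV k ω ≠ 0 := by
  rw [gammaRV_eq, epsRV]
  cases ω.1 <;> simp [sgn]

theorem ARV_eq (ω : Omega K) (k : Fin K) :
    ARV k ω = if k ∈ changedDigits ω then gammaRV k ω else betaRV k ω := by
  simp only [ARV, alphaRV, mem_changedDigits]
  split_ifs <;> simp

theorem BRV_eq (ω : Omega K) (k : Fin K) :
    BRV k ω = if k ∈ changedDigits ω then -gammaRV k ω else betaRV k ω := by
  simp only [BRV, alphaRV, mem_changedDigits]
  split_ifs <;> simp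

theorem BRV_ne_ARV_iff {ω : Omega K} {k : Fin K} :
    BRV k ω ≠ ARV k ω ↔ k ∈ changedDigits ω := by
  rw [ARV_eq, BRV_eq]
  split_ifs with h
  · have := gammaRV_ne_zero ω k
    simp only [h, ne_eq, iff_true]
    omega
  · simp [h]

theorem epsChange_iff {ω : Omega K} {i : ℕ} :
    epsChange M N i ω ↔ HitsBlock M N (changedDigits ω) i := by
  simp only [epsChange, HitsBlock, BRV_ne_ARV_iff, and_comm]

theorem ARV_eq_avert_iff {ω : Omega K} :
    (∀ k, ARV k ω = avert M N k) ↔ Alternates (avert M N) (changedDigits ω) (epsRV ω) ∧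
      ∀ k ∉ changedDigits ω, sgn (ω.2.2 k) = avert M N k := by
  simp only [ARV_eq, ite_eq_iff', forall_and, gammaRV_eq, betaRV, Alternates]
  exact and_congr (forall₂_congr fun _ _ => eq_comm) Iff.rfl

theorem card_filter_sgn_eq_avert (k : Fin K) : #{c : Bool | sgn c = avert M N k} = 1 := by
  rw [avert]
  split_ifs <;> decide

theorem card_filter_ARV_eq_avert (P : Bool → Finset (Fin K) → Prop)
    [∀ b S, Decidable (P b S)] :
    #{ω : Omega K | (∀ k, ARV k ω = avert M N k) ∧ P ω.1 (changedDigits ω)} =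
      #{p : Bool × Finset (Fin K) | Alternates (avert M N) p.2 (sgn p.1) ∧ P p.1 p.2} * 2 ^ K := by
  refine (card_eq_sum_card_fiberwise (f := fun ω => (ω.1, changedDigits ω))
    fun ω hω => ?_).trans (sum_const_nat fun p hp => ?_)
  · obtain ⟨hA, hP⟩ := (mem_filter.1 hω).2
    exact mem_filter.2 ⟨mem_univ _, (ARV_eq_avert_iff.1 hA).1, hP⟩
  obtain ⟨b, S⟩ := p
  obtain ⟨halt, hP⟩ := (mem_filter.1 hp).2
  have hfiber : ({ω ∈ {ω : Omega K | (∀ k, ARV k ω = avert M N k) ∧ P ω.1 (changedDigits ω)} |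
      (ω.1, changedDigits ω) = (b, S)} : Finset (Omega K)) =
      {b} ×ˢ (Fintype.piFinset (fun k => if k ∈ S then {0} else ({0}ᶜ : Finset (Fin 3))) ×ˢ
        Fintype.piFinset
          (fun k => if k ∈ S then univ else ({c | sgn c = avert M N k} : Finset Bool))) := by
    ext ⟨c, α, β⟩
    have hS : changedDigits ((c, α, β) : Omega K) = S ↔
        ∀ k, α k ∈ (if k ∈ S then {0} else ({0}ᶜ : Finset (Fin 3))) := by
      rw [Finset.ext_iff]
      refine forall_congr' fun k => ?_
      rw [mem_changedDigits]
      split_ifs with hk <;> simp [hk]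
    have hβ : ∀ k, β k ∈ (if k ∈ S then univ else ({c | sgn c = avert M N k} : Finset Bool)) ↔
        (k ∉ S → sgn (β k) = avert M N k) := fun k => by
      split_ifs with hk <;> simp [hk]
    simp only [mem_filter, mem_univ, true_and, mem_product, mem_singleton, Fintype.mem_piFinset,
      Prod.mk.injEq, ← hS, hβ, ARV_eq_avert_iff, epsRV]
    constructor
    · rintro ⟨⟨⟨-, hA⟩, -⟩, rfl, rfl⟩
      exact ⟨rfl, rfl, hA⟩
    · rintro ⟨rfl, rfl, hA⟩
      exact ⟨⟨⟨halt, hA⟩, hP⟩, rfl, rfl⟩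
  rw [hfiber, card_product, card_product, card_singleton, Fintype.card_piFinset,
    Fintype.card_piFinset, one_mul, ← prod_mul_distrib]
  refine (prod_congr rfl fun k _ => ?_).trans (Fin.prod_const K 2)
  split_ifs
  · simp
  · rw [card_filter_sgn_eq_avert, card_compl, card_singleton]
    rfl

end SampleSpace

section Factorization

variable {M : ℕ → ℕ} {N K j j' : ℕ}

variable (M N K) in
def headPatterns (j' : ℕ) : Finset (Bool × Finset (Fin K)) :=
  {p | Alternates (avert M N) p.2 (sgn p.1) ∧ HitsBlock M N p.2 j' ∧ ∀ k ∈ p.2, blk M N k ≤ j'}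

theorem mem_headPatterns {p : Bool × Finset (Fin K)} :
    p ∈ headPatterns M N K j' ↔
      Alternates (avert M N) p.2 (sgn p.1) ∧ HitsBlock M N p.2 j' ∧ ∀ k ∈ p.2, blk M N k ≤ j' := by
  simp [headPatterns]

/-- `sgn p.1 * (-1) ^ #p.2` is the sign a pattern continues with after its head. -/
theorem sgn_mul_neg_one_pow_card_of_mem_headPatterns {p : Bool × Finset (Fin K)}
    (hp : p ∈ headPatterns M N K j') : sgn p.1 * (-1) ^ #p.2 = (-1) ^ (j' + 1) := by
  obtain ⟨halt, ⟨k, hk, hkj⟩, hle⟩ := mem_headPatterns.1 hp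
  have hne : p.2.Nonempty := ⟨k, hk⟩
  have hmax : blk M N (p.2.max' hne) = j' := le_antisymm (hle _ (max'_mem _ _))
    (hkj ▸ blk_mono M N (Fin.le_def.1 (le_max' _ k hk)))
  have hlast := halt.apply_max' hne
  rw [avert_eq_neg_one_pow, hmax] at hlast
  obtain ⟨n, hn⟩ : ∃ n, #p.2 = n + 1 := ⟨_, (Nat.succ_pred_eq_of_pos hne.card_pos).symm⟩
  rw [hn, Nat.add_sub_cancel] at hlast
  rw [hn, pow_succ, pow_succ, hlast, mul_assoc]

theorem card_headPatterns_pos (hK : Ssum M N = K) (hM : 0 < M j') (hj' : j' < N) :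
    0 < #(headPatterns M N K j') := by
  have hk : Ssum M j' < K := by
    rw [← hK]
    exact (Ssum_succ M j' ▸ Nat.lt_add_of_pos_right hM).trans_le (Ssum_mono M hj')
  let k : Fin K := ⟨Ssum M j', hk⟩
  have hkj : blk M N k = j' := (blk_eq_iff hj').2
    ⟨le_rfl, by rw [Ssum_succ]; exact Nat.lt_add_of_pos_right hM⟩
  obtain ⟨b, hsgn⟩ := exists_sgn_eq_avert (M := M) (N := N) k
  refine card_pos.2 ⟨(b, {k}), mem_headPatterns.2 ⟨alternates_singleton.2 hsgn.symm,
    ⟨k, mem_singleton_self k, hkj⟩, fun l hl => ?_⟩⟩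
  rw [mem_singleton.1 hl, hkj]

theorem alternates_union_iff_mem_tailPatterns (hj' : j' < j) (hodd : Odd (j - j')) {b : Bool}
    {S T : Finset (Fin K)} (hS : (b, S) ∈ headPatterns M N K j') (hT : ∀ k ∈ T, j ≤ blk M N k) :
    Alternates (avert M N) (S ∪ T) (sgn b) ↔ T ∈ tailPatterns M N K j := by
  obtain ⟨halt, -, hle⟩ := mem_headPatterns.1 hS
  have hsign : sgn b * (-1) ^ #S = (-1) ^ j := by
    obtain ⟨r, hr⟩ := hodd
    rw [sgn_mul_neg_one_pow_card_of_mem_headPatterns hS, show j = j' + 1 + 2 * r by omega,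
      pow_add _ (j' + 1), pow_mul, neg_one_sq, one_pow, mul_one]
  rw [alternates_union (lt_of_blk_lt_of_le_blk (fun k hk => (hle k hk).trans_lt hj') hT), hsign,
    mem_tailPatterns]
  exact ⟨fun h => ⟨h.2, hT⟩, fun h => ⟨halt, h.1⟩⟩

theorem card_filter_alternates_hitsAfterGap_and (hj' : j' < j) (hodd : Odd (j - j'))
    (R : Finset (Fin K) → Prop)
    (hR : ∀ S T : Finset (Fin K), (∀ k ∈ S, blk M N k < j) → (R (S ∪ T) ↔ R T)) :
    #{p : Bool × Finset (Fin K) | Alternates (avert M N) p.2 (sgn p.1) ∧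
        HitsAfterGap M N j' j p.2 ∧ R p.2} =
      #(headPatterns M N K j') * #{T ∈ tailPatterns M N K j | R T} := by
  have hsplit : ∀ S : Finset (Fin K), (∀ i, j' < i → i < j → ¬ HitsBlock M N S i) →
      {k ∈ S | blk M N (k : Fin K) ≤ j'} ∪ {k ∈ S | j ≤ blk M N (k : Fin K)} = S := by
    intro S hgap
    rw [← filter_or]
    refine filter_true_of_mem fun k hk => ?_
    by_contra h
    exact hgap _ (by omega) (by omega) ⟨k, hk, rfl⟩
  rw [← card_product]
  refine card_nbij' (fun p => ((p.1, {k ∈ p.2 | blk M N k ≤ j'}), {k ∈ p.2 | j ≤ blk M N k}))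
    (fun q => (q.1.1, q.1.2 ∪ q.2)) ?_ ?_ ?_ ?_
  · rintro ⟨b, S⟩ hp
    rw [mem_coe, mem_filter] at hp
    obtain ⟨-, halt, ⟨⟨k, hk, hkj⟩, hgap⟩, hRS⟩ := hp
    have hle : ∀ k ∈ {k ∈ S | blk M N (k : Fin K) ≤ j'}, blk M N k ≤ j' :=
      fun k hk => (mem_filter.1 hk).2
    have hge : ∀ k ∈ {k ∈ S | j ≤ blk M N (k : Fin K)}, j ≤ blk M N k :=
      fun k hk => (mem_filter.1 hk).2
    have hlt : ∀ k ∈ {k ∈ S | blk M N (k : Fin K) ≤ j'}, blk M N k < j :=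
      fun k hk => (hle k hk).trans_lt hj'
    rw [← hsplit S hgap] at halt hRS
    have hhead : (b, {k ∈ S | blk M N (k : Fin K) ≤ j'}) ∈ headPatterns M N K j' :=
      mem_headPatterns.2 ⟨((alternates_union (lt_of_blk_lt_of_le_blk hlt hge)).1 halt).1,
        ⟨k, mem_filter.2 ⟨hk, hkj.le⟩, hkj⟩, hle⟩
    exact mem_product.2 ⟨hhead, mem_filter.2
      ⟨(alternates_union_iff_mem_tailPatterns hj' hodd hhead hge).1 halt, (hR _ _ hlt).1 hRS⟩⟩
  · rintro ⟨⟨b, S⟩, T⟩ hq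
    rw [mem_coe, mem_product, mem_filter] at hq
    obtain ⟨hhead, hT, hRT⟩ := hq
    obtain ⟨-, ⟨k, hk, hkj⟩, hle⟩ := mem_headPatterns.1 hhead
    have hge := (mem_tailPatterns.1 hT).2
    refine mem_filter.2 ⟨mem_univ _,
      (alternates_union_iff_mem_tailPatterns hj' hodd hhead hge).2 hT,
      ⟨⟨k, mem_union_left _ hk, hkj⟩, ?_⟩, (hR S T fun k hk => (hle k hk).trans_lt hj').2 hRT⟩
    rintro i hi hij ⟨k, hk, rfl⟩
    rcases mem_union.1 hk with h | h
    · exact absurd (hle k h) (by omega)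
    · exact absurd (hge k h) (by omega)
  · rintro ⟨b, S⟩ hp
    rw [mem_coe, mem_filter] at hp
    exact congrArg (b, ·) (hsplit S hp.2.2.1.2)
  · rintro ⟨⟨b, S⟩, T⟩ hq
    rw [mem_coe, mem_product] at hq
    have hle := (mem_headPatterns.1 hq.1).2.2
    have hge := (mem_tailPatterns.1 (mem_filter.1 hq.2).1).2
    simp only [filter_union, filter_true_of_mem hle, filter_true_of_mem hge,
      filter_false_of_mem fun k hk => not_le.2 ((hle k hk).trans_lt hj'),
      filter_false_of_mem fun k hk => not_le.2 (hj'.trans_le (hge k hk)), union_empty,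
      empty_union]

theorem card_filter_alternates_hitsAfterGap (hj' : j' < j) (hodd : Odd (j - j')) :
    #{p : Bool × Finset (Fin K) | Alternates (avert M N) p.2 (sgn p.1) ∧
        HitsAfterGap M N j' j p.2} =
      #(headPatterns M N K j') * #(tailPatterns M N K j) := by
  simpa using card_filter_alternates_hitsAfterGap_and (M := M) (N := N) hj' hodd (fun _ => True)
    fun _ _ _ => Iff.rfl

end Factorization

theorem unif_eq_uniformOn_univ (K : ℕ) : unif K = uniformOn Set.univ := by
  ext s hs
  rw [unif, PMF.toMeasure_uniformOfFintype_apply s hs, uniformOn_univ,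
    Measure.count_apply_finite _ s.toFinite, Set.Finite.card_toFinset]

theorem cond_unif_apply {K : ℕ} (s t : Finset (Omega K)) :
    cond (unif K) s t = #(s ∩ t) / #s := by
  rw [unif_eq_uniformOn_univ, uniformOn, cond_cond_eq_cond_inter MeasurableSet.univ
    (s.measurableSet), Set.univ_inter, ← uniformOn, uniformOn_apply_finset]

theorem cond_unif_ARV_eq_avert {M : ℕ → ℕ} {N K : ℕ} (P Q : Bool → Finset (Fin K) → Prop) :
    cond (unif K) {ω | (∀ k, ARV k ω = avert M N k) ∧ P ω.1 (changedDigits ω)}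
        {ω | Q ω.1 (changedDigits ω)} =
      #{p : Bool × Finset (Fin K) |
          Alternates (avert M N) p.2 (sgn p.1) ∧ P p.1 p.2 ∧ Q p.1 p.2} /
        #{p : Bool × Finset (Fin K) | Alternates (avert M N) p.2 (sgn p.1) ∧ P p.1 p.2} := by
  let D : Finset (Omega K) := {ω | (∀ k, ARV k ω = avert M N k) ∧ P ω.1 (changedDigits ω)}
  let T : Finset (Omega K) := {ω | Q ω.1 (changedDigits ω)}
  have hDT : D ∩ T = ({ω | (∀ k, ARV k ω = avert M N k) ∧
      (fun b S => P b S ∧ Q b S) ω.1 (changedDigits ω)} : Finset (Omega K)) := by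
    ext ω
    simp [D, T, and_assoc]
  have h := cond_unif_apply D T
  rw [coe_filter_univ, coe_filter_univ] at h
  rw [h, hDT, card_filter_ARV_eq_avert, card_filter_ARV_eq_avert (fun b S => P b S ∧ Q b S),
    Nat.cast_mul, Nat.cast_mul,
    ENNReal.mul_div_mul_right _ _ (by simp) (ENNReal.natCast_ne_top _)]

theorem natCast_mul_div_natCast_mul {a b c : ℕ} (ha : a ≠ 0) (hc : c ≠ 0) :
    ((a * b : ℕ) : ENNReal) / (a * c : ℕ) = ENNReal.ofReal (b / c) := by
  rw [Nat.cast_mul, Nat.cast_mul, ENNReal.mul_div_mul_left _ _ (by simpa using ha)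
    (ENNReal.natCast_ne_top a), ENNReal.ofReal_div_of_pos (by positivity),
    ENNReal.ofReal_natCast, ENNReal.ofReal_natCast]

/-- Subsequent phase after a change at odd gap (Theorem 1): conditionally on
`Y(0) = a`, `ε_{j'} = 1` and `ε_i = 0` for `j' < i < j` (with `j - j'` odd, as forced
by the alternating-sign rule), the probability of a change in block `j` is
`M_j · x_j^N` (0-indexed blocks; `xcf M N j` is the continued fraction `x_j^N`,
and when `j = N - 1` this equals `M_j/(M_j + 1)` by the convention `x_{N+1}^N = 1`). -/
theorem stmt16 (K N : ℕ) (M : ℕ → ℕ) (hM : ∀ m < N, 0 < M m)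
    (hK : ∑ m ∈ Finset.range N, M m = K)
    (j j' : ℕ) (hj' : j' < j) (hjN : j < N) (hodd : Odd (j - j')) :
    ProbabilityTheory.cond (unif K)
        ({ω | ∀ k : Fin K, ARV k ω = avert M N k} ∩ {ω | epsChange M N j' ω} ∩
          {ω | ∀ i : ℕ, j' < i → i < j → ¬ epsChange M N i ω})
        {ω | epsChange M N j ω} =
      ENNReal.ofReal ((M j : ℝ) * xcf M N j) := by
  have hSsum : Ssum M N = K := hK
  have hj'N : j' < N := hj'.trans hjN
  have hD : {ω | ∀ k : Fin K, ARV k ω = avert M N k} ∩ {ω | epsChange M N j' ω} ∩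
      {ω | ∀ i : ℕ, j' < i → i < j → ¬ epsChange M N i ω} =
      {ω | (∀ k, ARV k ω = avert M N k) ∧ HitsAfterGap M N j' j (changedDigits ω)} := by
    ext ω
    simp [HitsAfterGap, epsChange_iff, and_assoc]
  have hT : {ω : Omega K | epsChange M N j ω} = {ω | HitsBlock M N (changedDigits ω) j} := by
    simp only [epsChange_iff]
  rw [hD, hT, cond_unif_ARV_eq_avert (fun _ S => HitsAfterGap M N j' j S)
      fun _ S => HitsBlock M N S j,
    card_filter_alternates_hitsAfterGap_and hj' hodd (HitsBlock M N · j)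
      fun _ _ => hitsBlock_union_iff_of_lt,
    card_filter_alternates_hitsAfterGap hj' hodd, card_filter_hitsBlock_tailPatterns hSsum hjN,
    natCast_mul_div_natCast_mul (card_headPatterns_pos hSsum (hM j' hj'N) hj'N).ne'
      card_tailPatterns_pos.ne', xcf_eq_div hSsum hjN.le, Nat.cast_mul, mul_div_assoc]
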